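/- arXiv:2412.09872 — 4 statements merged into one kernel-verified Lean document; each statement's English description precedes it below -/
import Mathlib

section
/- Let X have continuous distribution function F with left endpoint x_* and right endpoint x^*. For p > 1 (and E[|X|^{p−1}] < ∞), the scale equation τ·E[(X−u)_+^{p−1}] = (1−τ)·E[(X−u)_−^{p−1}] has a unique solution θ_p(τ) ∈ (x_*, x^*) for every τ ∈ (0,1). -/
open MeasureTheory Set

section LpScaleAux
open Filter Topology
open MeasureTheory Set Filter Topology

variable {Ω : Type*} [MeasurableSpace Ω] {μ : Measure Ω}

lemma LpS.meas_part {Y : Ω → ℝ} (hY : Measurable Y) {q : ℝ} (hq : 0 ≤ q) (θ : ℝ) :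
    Measurable fun ω => max (Y ω - θ) 0 ^ q :=
  (Real.continuous_rpow_const hq).measurable.comp
    ((hY.sub measurable_const).max measurable_const)

lemma LpS.nonneg_part (Y : Ω → ℝ) (q θ : ℝ) (ω : Ω) : 0 ≤ max (Y ω - θ) 0 ^ q :=
  Real.rpow_nonneg (le_max_right _ _) q

lemma LpS.bound_part {Y : Ω → ℝ} {q : ℝ} (hq : 0 ≤ q) {θ c : ℝ} (hθ : |θ| ≤ c) (ω : Ω) :
    max (Y ω - θ) 0 ^ q ≤ 2 ^ q * (|Y ω| ^ q + c ^ q) := by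
  have h0 : (0:ℝ) ≤ c := le_trans (abs_nonneg θ) hθ
  have h1 : max (Y ω - θ) 0 ≤ |Y ω| + c := by
    refine max_le ?_ (by positivity)
    have := abs_le.mp (le_refl |Y ω|) |>.2
    have h2 : Y ω ≤ |Y ω| := le_abs_self _
    have h3 : -θ ≤ |θ| := neg_le_abs θ
    linarith
  have h2 : (|Y ω| + c) ^ q ≤ (2 * max (|Y ω|) c) ^ q := by
    refine Real.rpow_le_rpow (by positivity) ?_ hq
    rcases le_total (|Y ω|) c with h | h
    · rw [max_eq_right h]; linarith [abs_nonneg (Y ω)]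
    · rw [max_eq_left h]; linarith
  have h3 : (2 * max (|Y ω|) c) ^ q = 2 ^ q * (max (|Y ω|) c) ^ q :=
    Real.mul_rpow (by norm_num) (le_trans h0 (le_max_right _ _))
  have h4 : (max (|Y ω|) c) ^ q ≤ |Y ω| ^ q + c ^ q := by
    rcases max_cases (|Y ω|) c with ⟨he, _⟩ | ⟨he, _⟩ <;> rw [he]
    · nlinarith [Real.rpow_nonneg h0 q]
    · nlinarith [Real.rpow_nonneg (abs_nonneg (Y ω)) q]
  calc max (Y ω - θ) 0 ^ q ≤ (|Y ω| + c) ^ q :=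
        Real.rpow_le_rpow (le_max_right _ _) h1 hq
    _ ≤ 2 ^ q * (max (|Y ω|) c) ^ q := by rw [← h3]; exact h2
    _ ≤ 2 ^ q * (|Y ω| ^ q + c ^ q) := by
        have : (0:ℝ) ≤ 2 ^ q := Real.rpow_nonneg (by norm_num) q
        nlinarith

lemma LpS.integrable_part [IsFiniteMeasure μ] {Y : Ω → ℝ} (hY : Measurable Y) {q : ℝ}
    (hq : 0 ≤ q) (hint : Integrable (fun ω => |Y ω| ^ q) μ) (θ : ℝ) :
    Integrable (fun ω => max (Y ω - θ) 0 ^ q) μ := by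
  have hbb : Integrable (fun ω => 2 ^ q * (|Y ω| ^ q + |θ| ^ q)) μ :=
    (hint.add (integrable_const _)).const_mul _
  refine hbb.mono ((LpS.meas_part hY hq θ).aestronglyMeasurable) (ae_of_all _ fun ω => ?_)
  rw [Real.norm_eq_abs, Real.norm_eq_abs, abs_of_nonneg (LpS.nonneg_part Y q θ ω),
    abs_of_nonneg (by positivity)]
  exact LpS.bound_part hq le_rfl ω

lemma LpS.continuous_part [IsFiniteMeasure μ] {Y : Ω → ℝ} (hY : Measurable Y) {q : ℝ}
    (hq : 0 ≤ q) (hint : Integrable (fun ω => |Y ω| ^ q) μ) :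
    Continuous fun θ : ℝ => ∫ ω, max (Y ω - θ) 0 ^ q ∂μ := by
  rw [continuous_iff_continuousAt]
  intro θ₀
  apply continuousAt_of_dominated (bound := fun ω => 2 ^ q * (|Y ω| ^ q + (|θ₀| + 1) ^ q))
  · exact Eventually.of_forall fun θ => (LpS.meas_part hY hq θ).aestronglyMeasurable
  · filter_upwards [Metric.ball_mem_nhds θ₀ one_pos] with θ hθ
    refine ae_of_all _ fun ω => ?_
    rw [Real.norm_eq_abs, abs_of_nonneg (LpS.nonneg_part Y q θ ω)]
    refine LpS.bound_part hq ?_ ω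
    have := Metric.mem_ball.mp hθ
    rw [Real.dist_eq] at this
    have h2 := abs_sub_abs_le_abs_sub θ θ₀
    linarith
  · exact (hint.add (integrable_const _)).const_mul _
  · refine ae_of_all _ fun ω => ?_
    exact (((continuous_const.sub continuous_id).max continuous_const).rpow_const
      (fun _ => Or.inr hq)).continuousAt

lemma LpS.antitone_part [IsFiniteMeasure μ] {Y : Ω → ℝ} (hY : Measurable Y) {q : ℝ}
    (hq : 0 ≤ q) (hint : Integrable (fun ω => |Y ω| ^ q) μ) :
    Antitone fun θ : ℝ => ∫ ω, max (Y ω - θ) 0 ^ q ∂μ := by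
  intro θ₁ θ₂ h
  refine integral_mono (LpS.integrable_part hY hq hint θ₂)
    (LpS.integrable_part hY hq hint θ₁) fun ω => ?_
  exact Real.rpow_le_rpow (le_max_right _ _) (max_le_max (by linarith) le_rfl) hq

lemma LpS.lb_part [IsFiniteMeasure μ] {Y : Ω → ℝ} (hY : Measurable Y) {q : ℝ}
    (hq : 0 ≤ q) (hint : Integrable (fun ω => |Y ω| ^ q) μ) {θ c : ℝ} (hθc : θ ≤ c) :
    (c - θ) ^ q * (μ {ω | c < Y ω}).toReal ≤ ∫ ω, max (Y ω - θ) 0 ^ q ∂μ := by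
  have hs : MeasurableSet {ω | c < Y ω} := measurableSet_lt measurable_const hY
  have key : ∫ ω, ({ω | c < Y ω}).indicator (fun _ => (c - θ) ^ q) ω ∂μ
      = (μ {ω | c < Y ω}).toReal • ((c - θ) ^ q) := integral_indicator_const _ hs
  have hmono : ∫ ω, ({ω | c < Y ω}).indicator (fun _ => (c - θ) ^ q) ω ∂μ
      ≤ ∫ ω, max (Y ω - θ) 0 ^ q ∂μ := by
    refine integral_mono ((integrable_const _).indicator hs)
      (LpS.integrable_part hY hq hint θ) fun ω => ?_
    rw [Set.indicator_apply]
    by_cases hω : ω ∈ {ω | c < Y ω}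
    · rw [if_pos hω]
      have hω' : c < Y ω := hω
      exact Real.rpow_le_rpow (by linarith) (le_max_of_le_left (by linarith)) hq
    · rw [if_neg hω]
      exact LpS.nonneg_part Y q θ ω
  rw [key, smul_eq_mul] at hmono
  linarith [hmono]

lemma LpS.part_zero_iff [IsFiniteMeasure μ] {Y : Ω → ℝ} (hY : Measurable Y) {q : ℝ}
    (hq : 0 < q) (hint : Integrable (fun ω => |Y ω| ^ q) μ) (θ : ℝ) :
    ∫ ω, max (Y ω - θ) 0 ^ q ∂μ = 0 ↔ ∀ᵐ ω ∂μ, Y ω ≤ θ := by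
  rw [integral_eq_zero_iff_of_nonneg (fun ω => LpS.nonneg_part Y q θ ω)
    (LpS.integrable_part hY hq.le hint θ)]
  constructor
  · intro h
    filter_upwards [h] with ω hω
    simp only [Pi.zero_apply] at hω
    have h0 : max (Y ω - θ) 0 = 0 :=
      (Real.rpow_eq_zero (le_max_right _ _) (ne_of_gt hq)).mp hω
    have := le_max_left (Y ω - θ) 0
    rw [h0] at this
    linarith
  · intro h
    filter_upwards [h] with ω hω
    simp only [Pi.zero_apply]
    rw [max_eq_right (by linarith), Real.zero_rpow (ne_of_gt hq)]

lemma LpS.part_eq_imp [IsFiniteMeasure μ] {Y : Ω → ℝ} (hY : Measurable Y) {q : ℝ}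
    (hq : 0 < q) (hint : Integrable (fun ω => |Y ω| ^ q) μ) {θ θ' : ℝ} (h : θ < θ')
    (heq : ∫ ω, max (Y ω - θ) 0 ^ q ∂μ = ∫ ω, max (Y ω - θ') 0 ^ q ∂μ) :
    ∀ᵐ ω ∂μ, Y ω ≤ θ := by
  have hnn : 0 ≤ fun ω => max (Y ω - θ) 0 ^ q - max (Y ω - θ') 0 ^ q := fun ω =>
    sub_nonneg.mpr (Real.rpow_le_rpow (le_max_right _ _)
      (max_le_max (by linarith) le_rfl) hq.le)
  have hfi := (LpS.integrable_part hY hq.le hint θ).sub (LpS.integrable_part hY hq.le hint θ')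
  have hzero : ∫ ω, (max (Y ω - θ) 0 ^ q - max (Y ω - θ') 0 ^ q) ∂μ = 0 := by
    rw [integral_sub (LpS.integrable_part hY hq.le hint θ)
      (LpS.integrable_part hY hq.le hint θ'), heq, sub_self]
  have hae := (integral_eq_zero_iff_of_nonneg hnn hfi).mp hzero
  filter_upwards [hae] with ω hω
  by_contra hlt
  push_neg at hlt
  simp only [Pi.zero_apply] at hω
  have hmax : max (Y ω - θ) 0 = Y ω - θ := max_eq_left (by linarith)
  have h1 : max (Y ω - θ') 0 ^ q < max (Y ω - θ) 0 ^ q := by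
    rcases le_or_gt (Y ω) θ' with h2 | h2
    · rw [hmax, max_eq_right (by linarith), Real.zero_rpow (ne_of_gt hq)]
      exact Real.rpow_pos_of_pos (by linarith) q
    · rw [hmax, max_eq_left (by linarith)]
      exact Real.rpow_lt_rpow (by linarith) (by linarith) hq
  linarith


end LpScaleAux

open Filter Topology in
set_option maxHeartbeats 2000000 in
/-- Existence and uniqueness of the solution of the `L_p` scale equation, and the
fact that it lies strictly between the endpoints of the (continuous) distribution. -/
theorem lp_scale_equation_exists_unique {Ω : Type*} [MeasurableSpace Ω] (μ : Measure Ω)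
    [IsProbabilityMeasure μ] (X : Ω → ℝ) (hX : Measurable X) (p τ : ℝ)
    (hp : 1 < p) (hτ : τ ∈ Ioo (0 : ℝ) 1)
    (hcont : Continuous fun x : ℝ => (μ {ω | X ω ≤ x}).toReal)
    (hint : Integrable (fun ω => |X ω| ^ (p - 1)) μ) :
    (∃! θ : ℝ, τ * ∫ ω, max (X ω - θ) 0 ^ (p - 1) ∂μ =
        (1 - τ) * ∫ ω, max (θ - X ω) 0 ^ (p - 1) ∂μ) ∧
    ∀ θ : ℝ, (τ * ∫ ω, max (X ω - θ) 0 ^ (p - 1) ∂μ =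
        (1 - τ) * ∫ ω, max (θ - X ω) 0 ^ (p - 1) ∂μ) →
      sInf {y : EReal | ∃ x : ℝ, y = (x : EReal) ∧ 0 < (μ {ω | X ω ≤ x}).toReal}
          < (θ : EReal) ∧
      (θ : EReal) <
        sInf {y : EReal | ∃ x : ℝ, y = (x : EReal) ∧ 1 ≤ (μ {ω | X ω ≤ x}).toReal} := by
  obtain ⟨hτ0, hτ1⟩ := hτ
  set q := p - 1 with hqdef
  have hq : 0 < q := by rw [hqdef]; linarith
  have hXneg : Measurable fun ω => -X ω := hX.neg
  have hintneg : Integrable (fun ω => |(-X ω)| ^ q) μ := by simpa [abs_neg] using hint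
  -- B-side translated facts
  have hBmono : ∀ a b : ℝ, a ≤ b →
      (∫ ω, max (a - X ω) 0 ^ q ∂μ) ≤ ∫ ω, max (b - X ω) 0 ^ q ∂μ := by
    intro a b hab
    have h1 := LpS.antitone_part hXneg hq.le hintneg (neg_le_neg hab)
    simpa [sub_neg_eq_add, neg_add_eq_sub] using h1
  have hBcont : Continuous fun θ : ℝ => ∫ ω, max (θ - X ω) 0 ^ q ∂μ := by
    have h1 := (LpS.continuous_part hXneg hq.le hintneg).comp continuous_neg
    simpa [Function.comp_def, sub_neg_eq_add, neg_add_eq_sub] using h1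
  have hBlb : ∀ θ c : ℝ, c ≤ θ →
      (θ - c) ^ q * (μ {ω | X ω < c}).toReal ≤ ∫ ω, max (θ - X ω) 0 ^ q ∂μ := by
    intro θ c hcθ
    have h1 := LpS.lb_part hXneg hq.le hintneg (neg_le_neg hcθ)
    simpa [sub_neg_eq_add, neg_add_eq_sub, neg_lt_neg_iff] using h1
  have hBzero : ∀ θ : ℝ, (∫ ω, max (θ - X ω) 0 ^ q ∂μ) = 0 ↔ ∀ᵐ ω ∂μ, θ ≤ X ω := by
    intro θ
    have h1 := LpS.part_zero_iff hXneg hq hintneg (-θ)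
    simp only [sub_neg_eq_add, neg_add_eq_sub] at h1
    simpa [neg_le_neg_iff] using h1
  have hBeq_imp : ∀ a b : ℝ, a < b →
      (∫ ω, max (a - X ω) 0 ^ q ∂μ) = (∫ ω, max (b - X ω) 0 ^ q ∂μ) →
      ∀ᵐ ω ∂μ, b ≤ X ω := by
    intro a b hab heq
    have h1 := LpS.part_eq_imp hXneg hq hintneg (neg_lt_neg hab)
      (by simp only [sub_neg_eq_add, neg_add_eq_sub]; exact heq.symm)
    filter_upwards [h1] with ω h
    linarith
  -- nonnegativity of the two integrals
  have hAnn : ∀ θ : ℝ, 0 ≤ ∫ ω, max (X ω - θ) 0 ^ q ∂μ :=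
    fun θ => integral_nonneg fun ω => LpS.nonneg_part X q θ ω
  have hBnn : ∀ θ : ℝ, 0 ≤ ∫ ω, max (θ - X ω) 0 ^ q ∂μ := fun θ =>
    integral_nonneg fun ω => Real.rpow_nonneg (le_max_right _ _) q
  -- complement formula
  have hcompl : ∀ x : ℝ, (μ {ω | x < X ω}).toReal = 1 - (μ {ω | X ω ≤ x}).toReal := by
    intro x
    have hs : MeasurableSet {ω | X ω ≤ x} := hX measurableSet_Iic
    have h1 : {ω | x < X ω} = {ω | X ω ≤ x}ᶜ := by ext ω; simp [not_le]
    rw [h1, measure_compl hs (measure_ne_top μ _), measure_univ,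
      ENNReal.toReal_sub_of_le prob_le_one ENNReal.one_ne_top, ENNReal.toReal_one]
  -- a point with small left tail
  obtain ⟨n₁, hn₁⟩ : ∃ n : ℕ, (μ {ω | X ω ≤ -(n : ℝ)}).toReal < 1 / 2 := by
    have hmeas : ∀ n : ℕ, NullMeasurableSet {ω | X ω ≤ -(n : ℝ)} μ := fun n =>
      (hX measurableSet_Iic).nullMeasurableSet
    have hanti : Antitone fun n : ℕ => {ω | X ω ≤ -(n : ℝ)} := by
      intro m n hmn ω hω
      simp only [mem_setOf_eq] at hω ⊢
      have h2 : (m : ℝ) ≤ (n : ℝ) := Nat.cast_le.mpr hmn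
      linarith
    have hempty : ⋂ n : ℕ, {ω | X ω ≤ -(n : ℝ)} = ∅ := by
      ext ω
      simp only [mem_iInter, mem_setOf_eq, mem_empty_iff_false, iff_false, not_forall, not_le]
      obtain ⟨n, hn⟩ := exists_nat_gt (-X ω)
      exact ⟨n, by linarith⟩
    have htend := tendsto_measure_iInter_atTop hmeas hanti ⟨0, measure_ne_top μ _⟩
    rw [hempty, measure_empty] at htend
    have htend' : Tendsto (fun n : ℕ => (μ {ω | X ω ≤ -(n : ℝ)}).toReal) atTop (𝓝 0) := by
      exact (ENNReal.tendsto_toReal ENNReal.zero_ne_top).comp htend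
    exact (htend'.eventually (gt_mem_nhds (by norm_num : (0 : ℝ) < 1 / 2))).exists
  -- a point with large left probability
  obtain ⟨n₂, hn₂⟩ : ∃ n : ℕ, 1 / 2 < (μ {ω | X ω ≤ (n : ℝ)}).toReal := by
    have hmono : Monotone fun n : ℕ => {ω | X ω ≤ (n : ℝ)} := by
      intro m n hmn ω hω
      simp only [mem_setOf_eq] at hω ⊢
      have h2 : (m : ℝ) ≤ (n : ℝ) := Nat.cast_le.mpr hmn
      linarith
    have huniv : ⋃ n : ℕ, {ω | X ω ≤ (n : ℝ)} = univ := by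
      ext ω
      simp only [mem_iUnion, mem_setOf_eq, mem_univ, iff_true]
      exact exists_nat_ge (X ω)
    have htend := tendsto_measure_iUnion_atTop (μ := μ) hmono
    rw [huniv, measure_univ] at htend
    have htend' : Tendsto (fun n : ℕ => (μ {ω | X ω ≤ (n : ℝ)}).toReal) atTop (𝓝 1) := by
      exact (ENNReal.tendsto_toReal ENNReal.one_ne_top).comp htend
    exact (htend'.eventually (lt_mem_nhds (by norm_num : (1 : ℝ) / 2 < 1))).exists
  set c₁ : ℝ := -(n₁ : ℝ) with hc₁def
  set c₃ : ℝ := (n₂ : ℝ) + 1 with hc₃def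
  have hc₁ : 1 / 2 ≤ (μ {ω | c₁ < X ω}).toReal := by rw [hcompl]; linarith
  have hc₃ : 1 / 2 ≤ (μ {ω | X ω < c₃}).toReal := by
    refine le_trans hn₂.le (ENNReal.toReal_mono (measure_ne_top μ _) (measure_mono ?_))
    intro ω hω
    simp only [mem_setOf_eq] at hω ⊢
    rw [hc₃def]; linarith
  -- left-limit lemma from continuity
  have hleft : ∀ θ : ℝ, (∀ x, x < θ → (μ {ω | X ω ≤ x}).toReal = 0) →
      (μ {ω | X ω ≤ θ}).toReal = 0 := by
    intro θ hz
    have hseq : Tendsto (fun n : ℕ => θ - 1 / ((n : ℝ) + 1)) atTop (𝓝 θ) := by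
      have h0 := tendsto_one_div_add_atTop_nhds_zero_nat (𝕜 := ℝ)
      have hc : Tendsto (fun _ : ℕ => θ) atTop (𝓝 θ) := tendsto_const_nhds
      simpa using hc.sub h0
    have h1 : Tendsto (fun n : ℕ => (μ {ω | X ω ≤ θ - 1 / ((n : ℝ) + 1)}).toReal) atTop
        (𝓝 ((μ {ω | X ω ≤ θ}).toReal)) := (hcont.tendsto θ).comp hseq
    have h2 : (fun n : ℕ => (μ {ω | X ω ≤ θ - 1 / ((n : ℝ) + 1)}).toReal) = fun _ => 0 :=
      funext fun n => hz _ (by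
        have h3 : (0 : ℝ) < 1 / ((n : ℝ) + 1) := by positivity
        linarith)
    rw [h2] at h1
    exact tendsto_nhds_unique h1 tendsto_const_nhds
  -- existence: value with negative sign
  set K₂ : ℝ := (2 * τ * (∫ ω, max (X ω - c₃) 0 ^ q ∂μ) + 1) / (1 - τ) with hK₂def
  have hK₂ : 0 < K₂ := by
    rw [hK₂def]
    have h0 := hAnn c₃
    exact div_pos (by nlinarith) (by linarith)
  set θ₂ : ℝ := c₃ + K₂ ^ q⁻¹ with hθ₂def
  have hrp₂ : 0 ≤ K₂ ^ q⁻¹ := Real.rpow_nonneg hK₂.le _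
  have hθ₂c : c₃ ≤ θ₂ := by rw [hθ₂def]; linarith
  have hpow₂ : (θ₂ - c₃) ^ q = K₂ := by
    rw [hθ₂def, show c₃ + K₂ ^ q⁻¹ - c₃ = K₂ ^ q⁻¹ by ring]
    exact Real.rpow_inv_rpow hK₂.le hq.ne'
  have hfθ₂ : τ * (∫ ω, max (X ω - θ₂) 0 ^ q ∂μ)
      - (1 - τ) * (∫ ω, max (θ₂ - X ω) 0 ^ q ∂μ) < 0 := by
    have h1 : (∫ ω, max (X ω - θ₂) 0 ^ q ∂μ) ≤ ∫ ω, max (X ω - c₃) 0 ^ q ∂μ :=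
      LpS.antitone_part hX hq.le hint hθ₂c
    have h2 := hBlb θ₂ c₃ hθ₂c
    rw [hpow₂] at h2
    have h3 : K₂ * (1 / 2) ≤ K₂ * (μ {ω | X ω < c₃}).toReal :=
      mul_le_mul_of_nonneg_left hc₃ hK₂.le
    have h4 : (1 - τ) * K₂ = 2 * τ * (∫ ω, max (X ω - c₃) 0 ^ q ∂μ) + 1 := by
      rw [hK₂def, mul_comm, div_mul_cancel₀ _ (by linarith : (1:ℝ) - τ ≠ 0)]
    have h5 : (1 - τ) * (K₂ * (1 / 2)) ≤ (1 - τ) * (∫ ω, max (θ₂ - X ω) 0 ^ q ∂μ) :=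
      mul_le_mul_of_nonneg_left (le_trans h3 h2) (by linarith)
    have h6 : (1 - τ) * (K₂ * (1 / 2))
        = τ * (∫ ω, max (X ω - c₃) 0 ^ q ∂μ) + 1 / 2 := by linear_combination h4 / 2
    have h7 := mul_le_mul_of_nonneg_left h1 hτ0.le
    linarith
  -- existence: value with positive sign
  set K₁ : ℝ := (2 * (1 - τ) * (∫ ω, max (c₁ - X ω) 0 ^ q ∂μ) + 1) / τ with hK₁def
  have hK₁ : 0 < K₁ := by
    rw [hK₁def]
    have h0 := hBnn c₁
    exact div_pos (by nlinarith) hτ0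
  set θ₁ : ℝ := c₁ - K₁ ^ q⁻¹ with hθ₁def
  have hrp₁ : 0 ≤ K₁ ^ q⁻¹ := Real.rpow_nonneg hK₁.le _
  have hθ₁c : θ₁ ≤ c₁ := by rw [hθ₁def]; linarith
  have hpow₁ : (c₁ - θ₁) ^ q = K₁ := by
    rw [hθ₁def, show c₁ - (c₁ - K₁ ^ q⁻¹) = K₁ ^ q⁻¹ by ring]
    exact Real.rpow_inv_rpow hK₁.le hq.ne'
  have hfθ₁ : 0 < τ * (∫ ω, max (X ω - θ₁) 0 ^ q ∂μ)
      - (1 - τ) * (∫ ω, max (θ₁ - X ω) 0 ^ q ∂μ) := by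
    have h1 : (∫ ω, max (θ₁ - X ω) 0 ^ q ∂μ) ≤ ∫ ω, max (c₁ - X ω) 0 ^ q ∂μ :=
      hBmono _ _ hθ₁c
    have h2 := LpS.lb_part hX hq.le hint hθ₁c
    rw [hpow₁] at h2
    have h3 : K₁ * (1 / 2) ≤ K₁ * (μ {ω | c₁ < X ω}).toReal :=
      mul_le_mul_of_nonneg_left hc₁ hK₁.le
    have h4 : τ * K₁ = 2 * (1 - τ) * (∫ ω, max (c₁ - X ω) 0 ^ q ∂μ) + 1 := by
      rw [hK₁def, mul_comm, div_mul_cancel₀ _ (ne_of_gt hτ0)]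
    have h5 : τ * (K₁ * (1 / 2)) ≤ τ * (∫ ω, max (X ω - θ₁) 0 ^ q ∂μ) :=
      mul_le_mul_of_nonneg_left (le_trans h3 h2) hτ0.le
    have h6 : τ * (K₁ * (1 / 2))
        = (1 - τ) * (∫ ω, max (c₁ - X ω) 0 ^ q ∂μ) + 1 / 2 := by linear_combination h4 / 2
    have h7 := mul_le_mul_of_nonneg_left h1 (by linarith : (0:ℝ) ≤ 1 - τ)
    linarith
  have hf_anti : ∀ a b : ℝ, a ≤ b →
      τ * (∫ ω, max (X ω - b) 0 ^ q ∂μ) - (1 - τ) * (∫ ω, max (b - X ω) 0 ^ q ∂μ) ≤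
      τ * (∫ ω, max (X ω - a) 0 ^ q ∂μ) - (1 - τ) * (∫ ω, max (a - X ω) 0 ^ q ∂μ) := by
    intro a b hab
    have h1 : (∫ ω, max (X ω - b) 0 ^ q ∂μ) ≤ ∫ ω, max (X ω - a) 0 ^ q ∂μ :=
      LpS.antitone_part hX hq.le hint hab
    have h2 := hBmono a b hab
    nlinarith [mul_le_mul_of_nonneg_left h1 hτ0.le,
      mul_le_mul_of_nonneg_left h2 (by linarith : (0:ℝ) ≤ 1 - τ)]
  have hθ₁₂ : θ₁ ≤ θ₂ := by
    by_contra hcon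
    push_neg at hcon
    have := hf_anti θ₂ θ₁ hcon.le
    linarith
  have hfcont : Continuous fun θ : ℝ =>
      τ * (∫ ω, max (X ω - θ) 0 ^ q ∂μ) - (1 - τ) * (∫ ω, max (θ - X ω) 0 ^ q ∂μ) :=
    (continuous_const.mul (LpS.continuous_part hX hq.le hint)).sub
      (continuous_const.mul hBcont)
  obtain ⟨θ₀, -, hθ₀⟩ := intermediate_value_Icc' hθ₁₂ hfcont.continuousOn
    (mem_Icc.mpr ⟨hfθ₂.le, hfθ₁.le⟩)
  have hroot₀ : τ * (∫ ω, max (X ω - θ₀) 0 ^ q ∂μ)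
      = (1 - τ) * (∫ ω, max (θ₀ - X ω) 0 ^ q ∂μ) := sub_eq_zero.mp hθ₀
  -- uniqueness
  have key : ∀ a b : ℝ, a < b →
      τ * (∫ ω, max (X ω - a) 0 ^ q ∂μ) = (1 - τ) * (∫ ω, max (a - X ω) 0 ^ q ∂μ) →
      τ * (∫ ω, max (X ω - b) 0 ^ q ∂μ) = (1 - τ) * (∫ ω, max (b - X ω) 0 ^ q ∂μ) →
      False := by
    intro a b hab ha hb
    have hAle : (∫ ω, max (X ω - b) 0 ^ q ∂μ) ≤ ∫ ω, max (X ω - a) 0 ^ q ∂μ :=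
      LpS.antitone_part hX hq.le hint hab.le
    have hBle := hBmono a b hab.le
    have e1 : τ * (∫ ω, max (X ω - a) 0 ^ q ∂μ) ≤ τ * (∫ ω, max (X ω - b) 0 ^ q ∂μ) := by
      rw [ha, hb]
      exact mul_le_mul_of_nonneg_left hBle (by linarith)
    have e2 : τ * (∫ ω, max (X ω - b) 0 ^ q ∂μ) ≤ τ * (∫ ω, max (X ω - a) 0 ^ q ∂μ) :=
      mul_le_mul_of_nonneg_left hAle hτ0.le
    have hAeq : (∫ ω, max (X ω - a) 0 ^ q ∂μ) = ∫ ω, max (X ω - b) 0 ^ q ∂μ :=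
      mul_left_cancel₀ (ne_of_gt hτ0) (le_antisymm e1 e2)
    have hBeq : (∫ ω, max (a - X ω) 0 ^ q ∂μ) = ∫ ω, max (b - X ω) 0 ^ q ∂μ := by
      have ha' := ha
      rw [hAeq] at ha'
      have h3 : (1 - τ) * (∫ ω, max (a - X ω) 0 ^ q ∂μ)
          = (1 - τ) * (∫ ω, max (b - X ω) 0 ^ q ∂μ) := by rw [← ha', ← hb]
      exact mul_left_cancel₀ (by linarith : (1:ℝ) - τ ≠ 0) h3
    have h1 : ∀ᵐ ω ∂μ, X ω ≤ a := LpS.part_eq_imp hX hq hint hab hAeq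
    have h2 : ∀ᵐ ω ∂μ, b ≤ X ω := hBeq_imp a b hab hBeq
    have hμne : μ ≠ 0 := by
      intro h0
      have h1' := measure_univ (μ := μ)
      rw [h0] at h1'
      simp at h1'
    have : NeBot (ae μ) := ae_neBot.mpr hμne
    obtain ⟨ω, hω1, hω2⟩ := (h1.and h2).exists
    linarith
  -- endpoints
  have endpt : ∀ θ : ℝ,
      τ * (∫ ω, max (X ω - θ) 0 ^ q ∂μ) = (1 - τ) * (∫ ω, max (θ - X ω) 0 ^ q ∂μ) →
      sInf {y : EReal | ∃ x : ℝ, y = (x : EReal) ∧ 0 < (μ {ω | X ω ≤ x}).toReal}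
          < (θ : EReal) ∧
      (θ : EReal) <
        sInf {y : EReal | ∃ x : ℝ, y = (x : EReal) ∧ 1 ≤ (μ {ω | X ω ≤ x}).toReal} := by
    intro θ hroot
    constructor
    · have hex : ∃ x, x < θ ∧ 0 < (μ {ω | X ω ≤ x}).toReal := by
        by_contra hno
        push_neg at hno
        have hFz : ∀ x, x < θ → (μ {ω | X ω ≤ x}).toReal = 0 := fun x hx =>
          le_antisymm (hno x hx) ENNReal.toReal_nonneg
        have hFθ := hleft θ hFz
        have hμθ : μ {ω | X ω ≤ θ} = 0 := by
          rcases (ENNReal.toReal_eq_zero_iff _).mp hFθ with h | h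
          · exact h
          · exact absurd h (measure_ne_top μ _)
        have hμlt : μ {ω | X ω < θ} = 0 :=
          measure_mono_null (fun ω (h : X ω < θ) => le_of_lt h) hμθ
        have hae1 : ∀ᵐ ω ∂μ, θ ≤ X ω := by
          rw [ae_iff]; simpa [not_le] using hμlt
        have hBθ : (∫ ω, max (θ - X ω) 0 ^ q ∂μ) = 0 := (hBzero θ).mpr hae1
        have hAθ : (∫ ω, max (X ω - θ) 0 ^ q ∂μ) = 0 := by
          rw [hBθ, mul_zero] at hroot
          rcases mul_eq_zero.mp hroot with h | h
          · exact absurd h (ne_of_gt hτ0)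
          · exact h
        have hae2 : ∀ᵐ ω ∂μ, X ω ≤ θ := (LpS.part_zero_iff hX hq hint θ).mp hAθ
        have hμgt : μ {ω | ¬ X ω ≤ θ} = 0 := ae_iff.mp hae2
        have hbad : (1 : ENNReal) ≤ 0 := by
          calc (1 : ENNReal) = μ univ := measure_univ.symm
            _ = μ ({ω | X ω ≤ θ} ∪ {ω | X ω ≤ θ}ᶜ) := by rw [union_compl_self]
            _ ≤ μ {ω | X ω ≤ θ} + μ ({ω | X ω ≤ θ}ᶜ) := measure_union_le _ _
            _ = 0 := by
                rw [hμθ, show ({ω | X ω ≤ θ}ᶜ : Set Ω) = {ω | ¬ X ω ≤ θ} from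
                  Set.compl_setOf _, hμgt, add_zero]
        simp at hbad
      obtain ⟨x, hxθ, hFx⟩ := hex
      exact lt_of_le_of_lt (sInf_le ⟨x, rfl, hFx⟩) (EReal.coe_lt_coe_iff.mpr hxθ)
    · have hFθlt1 : (μ {ω | X ω ≤ θ}).toReal < 1 := by
        by_contra hge
        push_neg at hge
        have hle1 : (μ {ω | X ω ≤ θ}).toReal ≤ 1 := by
          have h0 := ENNReal.toReal_mono ENNReal.one_ne_top
            (prob_le_one (μ := μ) (s := {ω | X ω ≤ θ}))
          simpa using h0
        have h0c : (μ {ω | θ < X ω}).toReal = 0 := by rw [hcompl]; linarith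
        have hμgt : μ {ω | θ < X ω} = 0 := by
          rcases (ENNReal.toReal_eq_zero_iff _).mp h0c with h | h
          · exact h
          · exact absurd h (measure_ne_top μ _)
        have hae1 : ∀ᵐ ω ∂μ, X ω ≤ θ := by
          rw [ae_iff]; simpa [not_lt] using hμgt
        have hAθ : (∫ ω, max (X ω - θ) 0 ^ q ∂μ) = 0 :=
          (LpS.part_zero_iff hX hq hint θ).mpr hae1
        have hBθ : (∫ ω, max (θ - X ω) 0 ^ q ∂μ) = 0 := by
          rw [hAθ, mul_zero] at hroot
          rcases mul_eq_zero.mp hroot.symm with h | h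
          · exact absurd h (by norm_num; linarith)
          · exact h
        have hae2 : ∀ᵐ ω ∂μ, θ ≤ X ω := (hBzero θ).mp hBθ
        have hμlt : μ {ω | X ω < θ} = 0 := by
          have h0 := ae_iff.mp hae2
          simpa [not_le] using h0
        have hFz : ∀ x, x < θ → (μ {ω | X ω ≤ x}).toReal = 0 := by
          intro x hx
          have h1 : μ {ω | X ω ≤ x} = 0 :=
            measure_mono_null (fun ω (h : X ω ≤ x) => lt_of_le_of_lt h hx) hμlt
          rw [h1]; simp
        have hFθ0 := hleft θ hFz
        linarith
      have hopen : IsOpen {x : ℝ | (μ {ω | X ω ≤ x}).toReal < 1} :=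
        isOpen_lt hcont continuous_const
      obtain ⟨ε, hε, hball⟩ := Metric.isOpen_iff.mp hopen θ hFθlt1
      have hmemball : θ + ε / 2 ∈ Metric.ball θ ε := by
        rw [Metric.mem_ball, Real.dist_eq, show θ + ε / 2 - θ = ε / 2 by ring,
          abs_of_nonneg (by linarith)]
        linarith
      have hx₀ : (μ {ω | X ω ≤ θ + ε / 2}).toReal < 1 := hball hmemball
      refine lt_of_lt_of_le (show (θ : EReal) < ((θ + ε / 2 : ℝ) : EReal) from
        EReal.coe_lt_coe_iff.mpr (by linarith)) (le_sInf ?_)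
      rintro y ⟨x, rfl, hx⟩
      have hxge : θ + ε / 2 ≤ x := by
        by_contra hlt
        push_neg at hlt
        have hmono2 : (μ {ω | X ω ≤ x}).toReal ≤ (μ {ω | X ω ≤ θ + ε / 2}).toReal :=
          ENNReal.toReal_mono (measure_ne_top μ _)
            (measure_mono fun ω (h : X ω ≤ x) => le_trans h hlt.le)
        linarith
      exact EReal.coe_le_coe_iff.mpr hxge
  refine ⟨⟨θ₀, hroot₀, ?_⟩, endpt⟩
  intro θ' hθ'
  rcases lt_trichotomy θ' θ₀ with h | h | h
  · exact (key θ' θ₀ h hθ' hroot₀).elim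
  · exact h
  · exact (key θ₀ θ' h hroot₀ hθ').elim
end

section
/- Under the same hypotheses, the map τ ↦ θ_p(τ) defined by the scale equation is strictly increasing on (0,1), with lim_{τ↑1} θ_p(τ) = x^* and lim_{τ↓0} θ_p(τ) = x_*. -/
open MeasureTheory Set Filter Topology

lemma lpq_integrable_aux {Ω : Type*} [MeasurableSpace Ω] {μ : Measure Ω}
    [IsProbabilityMeasure μ] {X : Ω → ℝ} {p : ℝ} (hp : 1 < p)
    (hint : Integrable (fun ω => |X ω| ^ (p - 1)) μ) (c : ℝ) (Y : Ω → ℝ) (hY : Measurable Y)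
    (hbd : ∀ ω, |Y ω| ≤ |X ω| + |c|) :
    Integrable (fun ω => max (Y ω) 0 ^ (p - 1)) μ := by
  have hp1 : (0:ℝ) < p - 1 := by linarith
  have hgcont : Continuous (fun a : ℝ => max a 0 ^ (p - 1)) :=
    (Real.continuous_rpow_const hp1.le).comp (continuous_id.max continuous_const)
  refine Integrable.mono'
    ((hint.add (integrable_const (|c| ^ (p - 1)))).const_mul (2 ^ (p - 1)))
    ((hgcont.measurable.comp hY).aestronglyMeasurable) ?_
  filter_upwards with ω
  rw [Real.norm_eq_abs, abs_of_nonneg (Real.rpow_nonneg (le_max_right _ _) _)]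
  have h1 : max (Y ω) 0 ≤ |X ω| + |c| := max_le ((le_abs_self _).trans (hbd ω)) (by positivity)
  have h2 : max (Y ω) 0 ^ (p - 1) ≤ (|X ω| + |c|) ^ (p - 1) :=
    Real.rpow_le_rpow (le_max_right _ _) h1 hp1.le
  have h3 : (|X ω| + |c|) ^ (p - 1) ≤ (2 * max |X ω| |c|) ^ (p - 1) := by
    refine Real.rpow_le_rpow (by positivity) ?_ hp1.le
    rcases le_total |X ω| |c| with h | h
    · rw [max_eq_right h]; linarith
    · rw [max_eq_left h]; linarith
  have h4 : (2 * max |X ω| |c|) ^ (p - 1)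
      = 2 ^ (p - 1) * max |X ω| |c| ^ (p - 1) :=
    Real.mul_rpow (by norm_num) (by positivity)
  have h5 : max |X ω| |c| ^ (p - 1) ≤ |X ω| ^ (p - 1) + |c| ^ (p - 1) := by
    rcases le_total |X ω| |c| with h | h
    · rw [max_eq_right h]; have : (0:ℝ) ≤ |X ω| ^ (p-1) := by positivity
      linarith
    · rw [max_eq_left h]; have : (0:ℝ) ≤ |c| ^ (p-1) := by positivity
      linarith
  have h6 : (0:ℝ) ≤ 2 ^ (p-1) := by positivity
  calc max (Y ω) 0 ^ (p - 1) ≤ (2 * max |X ω| |c|) ^ (p - 1) := h2.trans h3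
    _ = 2 ^ (p - 1) * max |X ω| |c| ^ (p - 1) := h4
    _ ≤ 2 ^ (p - 1) * (|X ω| ^ (p - 1) + |c| ^ (p - 1)) := by
        exact mul_le_mul_of_nonneg_left h5 h6

/-- Strict monotonicity in the level, and endpoint limits, of the `L_p`-quantile
defined by the scale equation. -/
theorem lp_quantile_strictMono_and_limits {Ω : Type*} [MeasurableSpace Ω] (μ : Measure Ω)
    [IsProbabilityMeasure μ] (X : Ω → ℝ) (hX : Measurable X) (p : ℝ) (hp : 1 < p)
    (hcont : Continuous fun x : ℝ => (μ {ω | X ω ≤ x}).toReal)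
    (hint : Integrable (fun ω => |X ω| ^ (p - 1)) μ) (θ : ℝ → ℝ)
    (hθ : ∀ τ ∈ Ioo (0 : ℝ) 1,
      τ * ∫ ω, max (X ω - θ τ) 0 ^ (p - 1) ∂μ =
        (1 - τ) * ∫ ω, max (θ τ - X ω) 0 ^ (p - 1) ∂μ) :
    StrictMonoOn θ (Ioo (0 : ℝ) 1) ∧
    Tendsto (fun τ => (θ τ : EReal)) (nhdsWithin 1 (Ioo (0 : ℝ) 1))
      (nhds (sInf {y : EReal | ∃ x : ℝ, y = (x : EReal) ∧ 1 ≤ (μ {ω | X ω ≤ x}).toReal})) ∧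
    Tendsto (fun τ => (θ τ : EReal)) (nhdsWithin 0 (Ioo (0 : ℝ) 1))
      (nhds (sInf {y : EReal | ∃ x : ℝ, y = (x : EReal) ∧ 0 < (μ {ω | X ω ≤ x}).toReal})) := by
  have hp1 : (0:ℝ) < p - 1 := by linarith
  set F : ℝ → ℝ := fun x => (μ {ω | X ω ≤ x}).toReal with hF
  set G : ℝ → ℝ := fun t => ∫ ω, max (X ω - t) 0 ^ (p - 1) ∂μ with hGdef
  set H : ℝ → ℝ := fun t => ∫ ω, max (t - X ω) 0 ^ (p - 1) ∂μ with hHdef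
  have heq : ∀ τ ∈ Ioo (0:ℝ) 1, τ * G (θ τ) = (1 - τ) * H (θ τ) := hθ
  -- integrability
  have intG : ∀ t : ℝ, Integrable (fun ω => max (X ω - t) 0 ^ (p - 1)) μ := by
    intro t
    refine lpq_integrable_aux hp hint t _ (hX.sub measurable_const) fun ω => ?_
    exact abs_sub _ _
  have intH : ∀ t : ℝ, Integrable (fun ω => max (t - X ω) 0 ^ (p - 1)) μ := by
    intro t
    refine lpq_integrable_aux hp hint t _ (measurable_const.sub hX) fun ω => ?_
    calc |t - X ω| ≤ |t| + |X ω| := abs_sub _ _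
      _ = |X ω| + |t| := by ring
  -- nonnegativity
  have Gnn : ∀ t, 0 ≤ G t := fun t =>
    integral_nonneg fun ω => Real.rpow_nonneg (le_max_right _ _) _
  have Hnn : ∀ t, 0 ≤ H t := fun t =>
    integral_nonneg fun ω => Real.rpow_nonneg (le_max_right _ _) _
  -- monotonicity
  have Ganti : ∀ s t : ℝ, s ≤ t → G t ≤ G s := by
    intro s t hst
    refine integral_mono (intG t) (intG s) fun ω => ?_
    exact Real.rpow_le_rpow (le_max_right _ _)
      (max_le_max (by linarith) le_rfl) hp1.le
  have Hmono : ∀ s t : ℝ, s ≤ t → H s ≤ H t := by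
    intro s t hst
    refine integral_mono (intH s) (intH t) fun ω => ?_
    exact Real.rpow_le_rpow (le_max_right _ _)
      (max_le_max (by linarith) le_rfl) hp1.le
  -- zero characterizations
  have Gzero : ∀ t : ℝ, G t = 0 ↔ ∀ᵐ ω ∂μ, X ω ≤ t := by
    intro t
    rw [hGdef]
    rw [integral_eq_zero_iff_of_nonneg
      (fun ω => Real.rpow_nonneg (le_max_right _ _) _) (intG t)]
    constructor
    · intro h; filter_upwards [h] with ω hω
      have := (Real.rpow_eq_zero (le_max_right _ _) (ne_of_gt hp1)).mp hω
      have : X ω - t ≤ 0 := by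
        by_contra hc
        push_neg at hc
        rw [max_eq_left hc.le] at this
        linarith
      linarith
    · intro h; filter_upwards [h] with ω hω
      have : max (X ω - t) 0 = 0 := max_eq_right (by linarith)
      simp only [Pi.zero_apply, this]
      exact Real.zero_rpow (ne_of_gt hp1)
  have Hzero : ∀ t : ℝ, H t = 0 ↔ ∀ᵐ ω ∂μ, t ≤ X ω := by
    intro t
    rw [hHdef]
    rw [integral_eq_zero_iff_of_nonneg
      (fun ω => Real.rpow_nonneg (le_max_right _ _) _) (intH t)]
    constructor
    · intro h; filter_upwards [h] with ω hω
      have := (Real.rpow_eq_zero (le_max_right _ _) (ne_of_gt hp1)).mp hω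
      have : t - X ω ≤ 0 := by
        by_contra hc
        push_neg at hc
        rw [max_eq_left hc.le] at this
        linarith
      linarith
    · intro h; filter_upwards [h] with ω hω
      have : max (t - X ω) 0 = 0 := max_eq_right (by linarith)
      simp only [Pi.zero_apply, this]
      exact Real.zero_rpow (ne_of_gt hp1)
  have posθ : ∀ τ ∈ Ioo (0:ℝ) 1, 0 < G (θ τ) ∧ 0 < H (θ τ) := by
    have ms : ∀ x : ℝ, MeasurableSet {ω | X ω ≤ x} := fun x => hX measurableSet_Iic
    have F_eq_one : ∀ x : ℝ, (∀ᵐ ω ∂μ, X ω ≤ x) → F x = 1 := by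
      intro x h
      have h0 : μ {ω | ¬ X ω ≤ x} = 0 := ae_iff.mp h
      have h1 : μ {ω | X ω ≤ x} = 1 := by
        have h2 := measure_add_measure_compl (μ := μ) (ms x)
        rw [show {ω | X ω ≤ x}ᶜ = {ω | ¬ X ω ≤ x} from rfl, h0, add_zero, measure_univ] at h2
        exact h2
      rw [hF]; simp [h1]
    intro τ hτ
    have key : ¬ (G (θ τ) = 0 ∧ H (θ τ) = 0) := by
      rintro ⟨hg, hh⟩
      have h1 : F (θ τ) = 1 := F_eq_one _ ((Gzero _).mp hg)
      have h2 : ∀ z, z < θ τ → F z = 0 := by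
        intro z hz
        have hsub : {ω | X ω ≤ z} ⊆ {ω | ¬ θ τ ≤ X ω} := fun ω hω => by
          simp only [mem_setOf_eq] at *; linarith
        have h0 : μ {ω | X ω ≤ z} = 0 :=
          measure_mono_null hsub (ae_iff.mp ((Hzero _).mp hh))
        rw [hF]; simp [h0]
      have hseq : Tendsto (fun n : ℕ => θ τ - 1/(n+1)) atTop (𝓝 (θ τ)) := by
        have h : Tendsto (fun n : ℕ => 1 / ((n:ℝ) + 1)) atTop (𝓝 0) := tendsto_one_div_add_atTop_nhds_zero_nat
        have h2 : Tendsto (fun _ : ℕ => θ τ) atTop (𝓝 (θ τ)) := tendsto_const_nhds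
        simpa using h2.sub h
      have h3 : Tendsto (fun n : ℕ => F (θ τ - 1/(n+1))) atTop (𝓝 (F (θ τ))) :=
        (hcont.tendsto _).comp hseq
      have h4 : (fun n : ℕ => F (θ τ - 1/(n+1))) = fun _ => (0:ℝ) := by
        funext n
        refine h2 _ ?_
        have : (0:ℝ) < 1/(n+1) := by positivity
        linarith
      rw [h4] at h3
      have h5 := tendsto_nhds_unique h3 tendsto_const_nhds
      rw [h1] at h5; norm_num at h5
    have hGH := heq τ hτ
    have hτ0 := hτ.1
    have hτ1 := hτ.2
    have hg : G (θ τ) ≠ 0 := by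
      intro hg
      apply key
      refine ⟨hg, ?_⟩
      rw [hg, mul_zero] at hGH
      rcases mul_eq_zero.mp hGH.symm with h | h
      · linarith
      · exact h
    have hh : H (θ τ) ≠ 0 := by
      intro hh
      apply key
      refine ⟨?_, hh⟩
      rw [hh, mul_zero] at hGH
      rcases mul_eq_zero.mp hGH with h | h
      · linarith
      · exact h
    exact ⟨(Gnn _).lt_of_ne (Ne.symm hg), (Hnn _).lt_of_ne (Ne.symm hh)⟩
  obtain ⟨up, lowmem, ex_hi, ex_lo⟩ :
      (∀ τ ∈ Ioo (0:ℝ) 1, ∀ x : ℝ, 1 ≤ F x → θ τ ≤ x) ∧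
      (∀ τ ∈ Ioo (0:ℝ) 1, 0 < F (θ τ)) ∧
      (∀ x : ℝ, F x < 1 → ∃ τ ∈ Ioo (0:ℝ) 1, x < θ τ) ∧
      (∀ x : ℝ, (∃ z, z < x ∧ 0 < F z) → ∃ τ ∈ Ioo (0:ℝ) 1, θ τ < x) := by
    have ms : ∀ x : ℝ, MeasurableSet {ω | X ω ≤ x} := fun x => hX measurableSet_Iic
    have F_eq_one : ∀ x : ℝ, (∀ᵐ ω ∂μ, X ω ≤ x) → F x = 1 := by
      intro x h
      have h0 : μ {ω | ¬ X ω ≤ x} = 0 := ae_iff.mp h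
      have h1 : μ {ω | X ω ≤ x} = 1 := by
        have h2 := measure_add_measure_compl (μ := μ) (ms x)
        rw [show {ω | X ω ≤ x}ᶜ = {ω | ¬ X ω ≤ x} from rfl, h0, add_zero, measure_univ] at h2
        exact h2
      rw [hF]; simp [h1]
    refine ⟨?_, ?_, ?_, ?_⟩
    · -- up
      intro τ hτ x hx
      by_contra hc
      push_neg at hc
      have h1 : μ {ω | X ω ≤ x} = 1 := by
        refine le_antisymm prob_le_one ?_
        have := (ENNReal.toReal_le_toReal ENNReal.one_ne_top (measure_ne_top μ _)).mp
          (by rw [hF] at hx; simpa using hx)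
        exact this
      have h2 : μ {ω | X ω ≤ x}ᶜ = 0 := by
        rw [measure_compl (ms x) (measure_ne_top μ _), h1, measure_univ, tsub_self]
      have hae : ∀ᵐ ω ∂μ, X ω ≤ x := by rw [ae_iff]; exact h2
      have hae2 : ∀ᵐ ω ∂μ, X ω ≤ θ τ := by
        filter_upwards [hae] with ω hω; linarith
      have := (Gzero (θ τ)).mpr hae2
      exact absurd this (posθ τ hτ).1.ne'
    · -- lowmem
      intro τ hτ
      rcases lt_or_ge 0 (F (θ τ)) with h | h
      · exact h
      have h0 : F (θ τ) = 0 := le_antisymm h (by rw [hF]; positivity)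
      have h1 : μ {ω | X ω ≤ θ τ} = 0 := by
        rw [hF] at h0
        simpa using (ENNReal.toReal_eq_zero_iff _).mp h0 |>.resolve_right (measure_ne_top μ _)
      have hae : ∀ᵐ ω ∂μ, θ τ ≤ X ω := by
        rw [ae_iff]
        refine measure_mono_null (fun ω hω => ?_) h1
        simp only [mem_setOf_eq] at *
        linarith
      have := (Hzero (θ τ)).mpr hae
      exact absurd this (posθ τ hτ).2.ne'
    · -- ex_hi
      intro x hFx
      have hGx : 0 < G x := by
        rcases (Gnn x).lt_or_eq with h | h
        · exact h
        · exact absurd (F_eq_one x ((Gzero x).mp h.symm)) (by linarith)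
      have hd : (0:ℝ) < G x + H x := by linarith [Hnn x]
      set τ := 1 - G x / (2 * (G x + H x)) with hτdef
      have hhalf : G x / (2 * (G x + H x)) ≤ 1/2 := by
        rw [div_le_iff₀ (by linarith)]
        linarith [Hnn x]
      have hpos : 0 < G x / (2 * (G x + H x)) := by positivity
      have hτIoo : τ ∈ Ioo (0:ℝ) 1 := ⟨by rw [hτdef]; linarith, by rw [hτdef]; linarith⟩
      refine ⟨τ, hτIoo, ?_⟩
      by_contra hc
      push_neg at hc
      have k1 : G x ≤ G (θ τ) := Ganti _ _ hc
      have k2 : H (θ τ) ≤ H x := Hmono _ _ hc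
      have e := heq τ hτIoo
      have hτ0 : 0 ≤ τ := hτIoo.1.le
      have hτ1 : 0 ≤ 1 - τ := by linarith [hτIoo.2]
      have k3 : τ * G x ≤ (1 - τ) * H x := by
        calc τ * G x ≤ τ * G (θ τ) := mul_le_mul_of_nonneg_left k1 hτ0
          _ = (1 - τ) * H (θ τ) := e
          _ ≤ (1 - τ) * H x := mul_le_mul_of_nonneg_left k2 hτ1
      rw [hτdef] at k3
      rw [div_eq_mul_inv] at k3
      have h2d : (2 * (G x + H x)) ≠ 0 := by positivity
      have k4 := mul_le_mul_of_nonneg_right k3 (le_of_lt (by positivity : (0:ℝ) < 2 * (G x + H x)))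
      field_simp at k4
      nlinarith [Hnn x, hGx, mul_pos hGx hGx]
    · -- ex_lo
      intro x hz
      obtain ⟨z, hzx, hFz⟩ := hz
      have hHx : 0 < H x := by
        rcases (Hnn x).lt_or_eq with h | h
        · exact h
        · exfalso
          have hae := (Hzero x).mp h.symm
          have h1 : μ {ω | X ω ≤ z} = 0 := by
            refine measure_mono_null (fun ω hω => ?_) (ae_iff.mp hae)
            simp only [mem_setOf_eq] at *
            linarith
          rw [hF] at hFz
          simp [h1] at hFz
      have hd : (0:ℝ) < G x + H x := by linarith [Gnn x]
      set τ := H x / (2 * (G x + H x)) with hτdef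
      have hhalf : H x / (2 * (G x + H x)) ≤ 1/2 := by
        rw [div_le_iff₀ (by linarith)]
        linarith [Gnn x]
      have hpos : 0 < H x / (2 * (G x + H x)) := by positivity
      have hτIoo : τ ∈ Ioo (0:ℝ) 1 := ⟨by rw [hτdef]; linarith, by rw [hτdef]; linarith⟩
      refine ⟨τ, hτIoo, ?_⟩
      by_contra hc
      push_neg at hc
      have k1 : G (θ τ) ≤ G x := Ganti _ _ hc
      have k2 : H x ≤ H (θ τ) := Hmono _ _ hc
      have e := heq τ hτIoo
      have hτ0 : 0 ≤ τ := hτIoo.1.le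
      have hτ1 : 0 ≤ 1 - τ := by linarith [hτIoo.2]
      have k3 : (1 - τ) * H x ≤ τ * G x := by
        calc (1 - τ) * H x ≤ (1 - τ) * H (θ τ) := mul_le_mul_of_nonneg_left k2 hτ1
          _ = τ * G (θ τ) := (e).symm
          _ ≤ τ * G x := mul_le_mul_of_nonneg_left k1 hτ0
      rw [hτdef] at k3
      rw [div_eq_mul_inv] at k3
      have k4 := mul_le_mul_of_nonneg_right k3 (le_of_lt (by positivity : (0:ℝ) < 2 * (G x + H x)))
      field_simp at k4
      nlinarith [Gnn x, hHx, mul_pos hHx hHx]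
  have smono : StrictMonoOn θ (Ioo (0:ℝ) 1) := by
    intro a ha b hb hab
    by_contra hc
    push_neg at hc
    have e1 := heq a ha
    have e2 := heq b hb
    obtain ⟨hGa, hHa⟩ := posθ a ha
    obtain ⟨hGb, hHb⟩ := posθ b hb
    have h1 : H (θ b) ≤ H (θ a) := Hmono _ _ hc
    have h2 : G (θ a) ≤ G (θ b) := Ganti _ _ hc
    have hq : G (θ a) * H (θ b) ≤ G (θ b) * H (θ a) :=
      mul_le_mul h2 h1 (Hnn _) (Gnn _)
    have m1 : a * (G (θ a) * H (θ b)) = (1 - a) * (H (θ a) * H (θ b)) := by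
      rw [← mul_assoc, e1, mul_assoc]
    have m2 : b * (G (θ b) * H (θ a)) = (1 - b) * (H (θ b) * H (θ a)) := by
      rw [← mul_assoc, e2, mul_assoc]
    have hw : 0 < H (θ a) * H (θ b) := mul_pos hHa hHb
    nlinarith [mul_le_mul_of_nonneg_left hq (le_of_lt ha.1),
      mul_le_mul_of_nonneg_left hq (mul_nonneg (le_of_lt ha.1) (le_of_lt (lt_trans ha.1 hab))),
      mul_pos ha.1 (lt_trans ha.1 hab), hab, ha.1, hb.2]
  have final :
      Tendsto (fun τ => (θ τ : EReal)) (nhdsWithin 1 (Ioo (0 : ℝ) 1))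
        (nhds (sInf {y : EReal | ∃ x : ℝ, y = (x : EReal) ∧ 1 ≤ F x})) ∧
      Tendsto (fun τ => (θ τ : EReal)) (nhdsWithin 0 (Ioo (0 : ℝ) 1))
        (nhds (sInf {y : EReal | ∃ x : ℝ, y = (x : EReal) ∧ 0 < F x})) := by
    set f : ℝ → EReal := fun τ => (θ τ : EReal) with hf
    have hfm : MonotoneOn f (Ioo (0:ℝ) 1) := fun a ha b hb hab =>
      EReal.coe_le_coe_iff.mpr (smono.monotoneOn ha hb hab)
    have hne : (Ioo (0:ℝ) 1).Nonempty := ⟨1/2, by norm_num⟩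
    constructor
    · have t1 : Tendsto f (𝓝[<] (1:ℝ)) (𝓝 (sSup (f '' Ioo 0 1))) :=
        MonotoneOn.tendsto_nhdsWithin_Ioo_left hne hfm (OrderTop.bddAbove _)
      have e1 : sSup (f '' Ioo 0 1) = sInf {y : EReal | ∃ x : ℝ, y = (x : EReal) ∧ 1 ≤ F x} := by
        apply le_antisymm
        · apply sSup_le
          rintro y ⟨τ, hτ, rfl⟩
          apply le_sInf
          rintro s ⟨x, rfl, hx⟩
          show (θ τ : EReal) ≤ (x : EReal)
          exact_mod_cast up τ hτ x hx
        · by_contra hlt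
          push_neg at hlt
          obtain ⟨x, hx1, hx2⟩ := EReal.exists_between_coe_real hlt
          have hFx : F x < 1 := by
            by_contra hge
            push_neg at hge
            have hle : sInf {y : EReal | ∃ x : ℝ, y = (x : EReal) ∧ 1 ≤ F x} ≤ (x : EReal) :=
              sInf_le ⟨x, rfl, hge⟩
            exact absurd hx2 (not_lt.mpr hle)
          obtain ⟨τ, hτ, hxθ⟩ := ex_hi x hFx
          have hlt2 : (x:EReal) < sSup (f '' Ioo 0 1) :=
            lt_of_lt_of_le (show (x:EReal) < (θ τ : EReal) by exact_mod_cast hxθ) (le_sSup ⟨τ, hτ, rfl⟩)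
          exact absurd hlt2 (not_lt.mpr hx1.le)
      rw [nhdsWithin_Ioo_eq_nhdsLT (zero_lt_one (α := ℝ)), ← e1]
      exact t1
    · have t0 : Tendsto f (𝓝[>] (0:ℝ)) (𝓝 (sInf (f '' Ioo 0 1))) :=
        MonotoneOn.tendsto_nhdsWithin_Ioo_right hne hfm (OrderBot.bddBelow _)
      have e0 : sInf (f '' Ioo 0 1) = sInf {y : EReal | ∃ x : ℝ, y = (x : EReal) ∧ 0 < F x} := by
        apply le_antisymm
        · by_contra hlt
          push_neg at hlt
          obtain ⟨x, hx1, hx2⟩ := EReal.exists_between_coe_real hlt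
          obtain ⟨y, hy, hyx⟩ := sInf_lt_iff.mp hx1
          obtain ⟨z, rfl, hz⟩ := hy
          obtain ⟨τ, hτ, hθx⟩ := ex_lo x ⟨z, EReal.coe_lt_coe_iff.mp hyx, hz⟩
          have : sInf (f '' Ioo 0 1) ≤ (x : EReal) :=
            le_trans (sInf_le ⟨τ, hτ, rfl⟩) (show (θ τ : EReal) ≤ (x:EReal) by exact_mod_cast hθx.le)
          exact absurd hx2 (not_lt.mpr this)
        · apply le_sInf
          rintro y ⟨τ, hτ, rfl⟩
          exact sInf_le ⟨θ τ, rfl, lowmem τ hτ⟩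
      rw [nhdsWithin_Ioo_eq_nhdsGT (zero_lt_one (α := ℝ)), ← e0]
      exact t0
  exact ⟨smono, final.1, final.2⟩
end

section
/- Let θ_p, θ_q : (0,1) → ℝ be continuous, strictly increasing on [τ_0,1), with θ_p(τ_0) ≤ θ_q(1−ε) and θ_p(τ) > θ_q(τ) for all τ ∈ (τ_0,1). Then for each ε ∈ (0, 1−τ_0) there exists a unique c ∈ [1, (1−τ_0)/ε] such that θ_p(1−cε) = θ_q(1−ε). -/
open Set

/-- Existence and uniqueness of the coefficient of tail risk equivalent level
transition (CTRELT). -/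
theorem ctrelt_exists_unique (θp θq : ℝ → ℝ) (τ0 : ℝ) (hτ0 : τ0 ∈ Ico (0 : ℝ) 1)
    (hpc : ContinuousOn θp (Ico τ0 1)) (hqc : ContinuousOn θq (Ico τ0 1))
    (hpm : StrictMonoOn θp (Ico τ0 1)) (hqm : StrictMonoOn θq (Ico τ0 1))
    (hdom : ∀ τ ∈ Ioo τ0 1, θq τ < θp τ)
    (ε : ℝ) (hε : ε ∈ Ioo 0 (1 - τ0)) (hbd : θp τ0 ≤ θq (1 - ε)) :
    ∃! c : ℝ, c ∈ Icc 1 ((1 - τ0) / ε) ∧ θp (1 - c * ε) = θq (1 - ε) := by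
  obtain ⟨hε0, hε1⟩ := hε
  obtain ⟨hτ00, hτ01⟩ := hτ0
  set b : ℝ := (1 - τ0) / ε with hb
  have hab : (1 : ℝ) ≤ b := (le_div_iff₀ hε0).2 (by linarith)
  -- the map g c = 1 - c * ε sends [1, b] into [τ0, 1 - ε] ⊆ Ico τ0 1
  have hmap : ∀ c ∈ Icc (1 : ℝ) b, (1 - c * ε) ∈ Ico τ0 1 := by
    intro c ⟨hc1, hcb⟩
    have : c * ε ≤ 1 - τ0 := by
      have := (le_div_iff₀ hε0).1 hcb
      linarith
    constructor
    · linarith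
    · nlinarith
  have hcont : ContinuousOn (fun c => θp (1 - c * ε)) (Icc 1 b) := by
    apply hpc.comp (Continuous.continuousOn (by continuity))
    intro c hc; exact hmap c hc
  have h1mem : (1 : ℝ) - 1 * ε ∈ Ico τ0 1 := hmap 1 ⟨le_refl 1, hab⟩
  have hbm : (1 : ℝ) - b * ε = τ0 := by
    rw [hb, div_mul_cancel₀ _ (ne_of_gt hε0)]; ring
  have hqp : θq (1 - ε) < θp (1 - ε) := hdom (1 - ε) ⟨by linarith, by linarith⟩
  have hval : θq (1 - ε) ∈ Icc (θp (1 - b * ε)) (θp (1 - 1 * ε)) := by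
    rw [hbm]
    constructor
    · exact hbd
    · rw [one_mul]; exact le_of_lt hqp
  have hivt := intermediate_value_Icc' hab hcont hval
  obtain ⟨c, hcmem, hceq0⟩ := hivt
  have hceq : θp (1 - c * ε) = θq (1 - ε) := hceq0
  refine ⟨c, ⟨hcmem, hceq⟩, ?_⟩
  rintro c' ⟨hc'mem, hc'eq⟩
  have hinj := hpm.injOn (hmap c' hc'mem) (hmap c hcmem) (by rw [hc'eq, hceq])
  have : c' * ε = c * ε := by linarith
  exact mul_right_cancel₀ (ne_of_gt hε0) this
end

section
/- Define F(x) = (1/2)(1 + √(1 − 4/(4+x²))) for x ≥ 0 and F(x) = (1/2)(1 − √(1 − 4/(4+x²))) for x < 0. Then F is a continuous, strictly increasing distribution function on ℝ with lim_{x→−∞} F(x) = 0 and lim_{x→∞} F(x) = 1, and its quantile function satisfies F⁻¹(1−ε) = (1−2ε)/√(ε(1−ε)) for ε ∈ (0,1). -/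
open Set Filter

private lemma koenker_pos (x : ℝ) : (0:ℝ) < 4 + x ^ 2 := by positivity

private lemma koenker_sub (x : ℝ) : 1 - 4 / (4 + x ^ 2) = x ^ 2 / (4 + x ^ 2) := by
  have h := koenker_pos x
  field_simp
  ring

private lemma koenker_eq (x : ℝ) :
    (if 0 ≤ x then (1 + Real.sqrt (1 - 4 / (4 + x ^ 2))) / 2
      else (1 - Real.sqrt (1 - 4 / (4 + x ^ 2))) / 2)
    = (1 + x / Real.sqrt (4 + x ^ 2)) / 2 := by
  have h := koenker_pos x
  have hs : Real.sqrt (1 - 4 / (4 + x ^ 2)) = |x| / Real.sqrt (4 + x ^ 2) := by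
    rw [koenker_sub, Real.sqrt_div (by positivity), Real.sqrt_sq_eq_abs]
  split_ifs with hx
  · rw [hs, abs_of_nonneg hx]
  · rw [hs, abs_of_neg (lt_of_not_ge hx)]
    ring

private lemma koenker_hasDeriv (x : ℝ) :
    HasDerivAt (fun x : ℝ => (1 + x / Real.sqrt (4 + x ^ 2)) / 2)
      (4 / ((4 + x ^ 2) * Real.sqrt (4 + x ^ 2)) / 2) x := by
  have h := koenker_pos x
  have hsp : 0 < Real.sqrt (4 + x ^ 2) := Real.sqrt_pos.mpr h
  have hu : HasDerivAt (fun x : ℝ => 4 + x ^ 2) (2 * x) x := by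
    simpa using (hasDerivAt_pow 2 x).const_add 4
  have hsq : HasDerivAt (fun x : ℝ => Real.sqrt (4 + x ^ 2))
      (2 * x / (2 * Real.sqrt (4 + x ^ 2))) x := hu.sqrt h.ne'
  have hdiv := (hasDerivAt_id x).div hsq hsp.ne'
  have heq : (1 * Real.sqrt (4 + x ^ 2) - x * (2 * x / (2 * Real.sqrt (4 + x ^ 2))))
      / Real.sqrt (4 + x ^ 2) ^ 2 = 4 / ((4 + x ^ 2) * Real.sqrt (4 + x ^ 2)) := by
    have h2 : Real.sqrt (4 + x ^ 2) ^ 2 = 4 + x ^ 2 := Real.sq_sqrt h.le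
    field_simp
    linear_combination (x ^ 2) * h2
  have := ((hdiv.const_add 1).div_const 2)
  simp only [id_eq] at this
  rw [heq] at this
  exact this

/-- The Koenker distribution function: it is a continuous strictly increasing CDF
whose `(1−ε)`-quantile equals `(1−2ε)/√(ε(1−ε))`. -/
theorem koenker_cdf_and_quantile :
    let F : ℝ → ℝ := fun x =>
      if 0 ≤ x then (1 + Real.sqrt (1 - 4 / (4 + x ^ 2))) / 2
      else (1 - Real.sqrt (1 - 4 / (4 + x ^ 2))) / 2
    Continuous F ∧ StrictMono F ∧
      Tendsto F atBot (nhds 0) ∧ Tendsto F atTop (nhds 1) ∧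
      ∀ ε ∈ Ioo (0 : ℝ) 1, F ((1 - 2 * ε) / Real.sqrt (ε * (1 - ε))) = 1 - ε := by
  intro F
  have hFG : F = fun x => (1 + x / Real.sqrt (4 + x ^ 2)) / 2 := by
    funext x; exact koenker_eq x
  have hcont : Continuous F := by
    rw [hFG]
    have : Continuous fun x : ℝ => x / Real.sqrt (4 + x ^ 2) :=
      continuous_id.div (Real.continuous_sqrt.comp (by continuity))
        (fun x => (Real.sqrt_pos.mpr (koenker_pos x)).ne')
    exact (continuous_const.add this).div_const 2
  have hmono : StrictMono F := by
    rw [hFG]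
    apply strictMono_of_deriv_pos
    intro x
    rw [(koenker_hasDeriv x).deriv]
    have h := koenker_pos x
    have hsp : 0 < Real.sqrt (4 + x ^ 2) := Real.sqrt_pos.mpr h
    positivity
  have hlim0 : Tendsto (fun x : ℝ => 4 / (4 + x ^ 2)) atTop (nhds 0) := by
    apply Tendsto.div_atTop tendsto_const_nhds
    exact tendsto_atTop_add_const_left _ 4 (tendsto_pow_atTop (by norm_num))
  have hlim0' : Tendsto (fun x : ℝ => 4 / (4 + x ^ 2)) atBot (nhds 0) := by
    apply Tendsto.div_atTop tendsto_const_nhds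
    apply tendsto_atTop_add_const_left
    have h := (tendsto_pow_atTop (n := 2) two_ne_zero).comp (tendsto_neg_atBot_atTop (G := ℝ))
    exact h.congr fun x => by simp [Function.comp]
  have hsqrt_top : Tendsto (fun x : ℝ => Real.sqrt (1 - 4 / (4 + x ^ 2))) atTop (nhds 1) := by
    have : Tendsto (fun x : ℝ => 1 - 4 / (4 + x ^ 2)) atTop (nhds 1) := by
      simpa using (tendsto_const_nhds (x := (1:ℝ))).sub hlim0
    simpa [Function.comp_def] using (Real.continuous_sqrt.tendsto 1).comp this
  have hsqrt_bot : Tendsto (fun x : ℝ => Real.sqrt (1 - 4 / (4 + x ^ 2))) atBot (nhds 1) := by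
    have : Tendsto (fun x : ℝ => 1 - 4 / (4 + x ^ 2)) atBot (nhds 1) := by
      simpa using (tendsto_const_nhds (x := (1:ℝ))).sub hlim0'
    simpa [Function.comp_def] using (Real.continuous_sqrt.tendsto 1).comp this
  refine ⟨hcont, hmono, ?_, ?_, ?_⟩
  · have h1 : Tendsto (fun x : ℝ => (1 - Real.sqrt (1 - 4 / (4 + x ^ 2))) / 2) atBot (nhds 0) := by
      have := ((tendsto_const_nhds (x := (1:ℝ))).sub hsqrt_bot).div_const 2
      simpa using this
    apply h1.congr'
    filter_upwards [eventually_lt_atBot (0:ℝ)] with x hx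
    simp [F, not_le.mpr hx]
  · have h1 : Tendsto (fun x : ℝ => (1 + Real.sqrt (1 - 4 / (4 + x ^ 2))) / 2) atTop (nhds 1) := by
      have := ((tendsto_const_nhds (x := (1:ℝ))).add hsqrt_top).div_const 2
      norm_num at this
      exact this
    apply h1.congr'
    filter_upwards [eventually_ge_atTop (0:ℝ)] with x hx
    simp [F, hx]
  · intro ε hε
    obtain ⟨hε0, hε1⟩ := hε
    set s := Real.sqrt (ε * (1 - ε)) with hs
    have hsp : 0 < s := Real.sqrt_pos.mpr (by nlinarith)
    have hs2 : s ^ 2 = ε * (1 - ε) := Real.sq_sqrt (by nlinarith)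
    set x := (1 - 2 * ε) / s with hx
    have hkey : 4 + x ^ 2 = (1 / s) ^ 2 := by
      rw [hx]
      field_simp
      nlinarith [hs2]
    have hsqrt : Real.sqrt (4 + x ^ 2) = 1 / s := by
      rw [hkey, Real.sqrt_sq (by positivity)]
    rw [hFG]
    simp only
    rw [hsqrt, hx]
    field_simp
    ring
end
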